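/- In S = F[[x,y]]/(x²y), the internal direct sum decomposition Q = x²Q ⊕ yQ of the total quotient ring Q holds: x²Q ∩ yQ = 0 and x²Q + yQ = Q. -/

import Mathlib

set_option synthInstance.maxHeartbeats 1000000
set_option maxHeartbeats 1000000

noncomputable section

/-- The D-infinity plane singularity `S = F[[x,y]]/(x²y)`. -/
abbrev Dinf (F : Type*) [Field F] : Type _ :=
  MvPowerSeries (Fin 2) F ⧸
    (Ideal.span {(MvPowerSeries.X (0 : Fin 2)) ^ 2 * MvPowerSeries.X 1} :
      Ideal (MvPowerSeries (Fin 2) F))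

variable (F : Type*) [Field F]

/-- The image of the variable `x` in `S`. -/
abbrev xS : Dinf F := Ideal.Quotient.mk _ (MvPowerSeries.X 0)

/-- The image of the variable `y` in `S`. -/
abbrev yS : Dinf F := Ideal.Quotient.mk _ (MvPowerSeries.X 1)

/-- The total quotient ring `Q` of `S`, the localization at the nonzerodivisors. -/
abbrev QS : Type _ := Localization (nonZeroDivisors (Dinf F))

/-- The canonical map `S → Q`. -/
abbrev toQ : Dinf F →+* QS F := algebraMap (Dinf F) (QS F)


/-!
Since `x²y = 0`, the ideals `x²Q` and `yQ` are complementary as soon as `x² + y` is a unit of `Q`: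
an element `z` of both is killed by `x² + y`, and `x² + y` lies in their sum. It is a unit because
it is a nonzerodivisor of `S`. In `F[[x,y]]`, from `x²y ∣ (x² + y)f` one gets `x² ∣ yf`, hence
`f = x²g`; cancelling `x²` leaves `y ∣ x²g`, hence `y ∣ g`.
-/

namespace MvPowerSeries

variable {σ R : Type*} [Semiring R]

theorem X_pow_dvd_of_dvd_X_pow_mul {s t : σ} (hst : s ≠ t) {n k : ℕ} {φ : MvPowerSeries σ R}
    (h : X s ^ n ∣ X t ^ k * φ) : X s ^ n ∣ φ := by
  classical
  rw [X_pow_dvd_iff] at h ⊢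
  intro m hm
  have := h (Finsupp.single t k + m) (by simpa [Finsupp.single_apply, hst.symm] using hm)
  rwa [X_pow_eq, coeff_monomial_mul, if_pos le_self_add, one_mul, add_tsub_cancel_left] at this

theorem X_pow_ne_zero [Nontrivial R] (s : σ) (n : ℕ) : (X s ^ n : MvPowerSeries σ R) ≠ 0 :=
  fun h => by simpa [X_pow_eq] using congrArg (coeff (Finsupp.single s n)) h

end MvPowerSeries

section

variable {R : Type*} [CommRing R]

theorem mul_dvd_of_mul_dvd_add_mul {p q : R} (hp : IsLeftRegular p)
    (hpq : ∀ f, p ∣ q * f → p ∣ f) (hqp : ∀ f, q ∣ p * f → q ∣ f) {f : R}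
    (h : p * q ∣ (p + q) * f) : p * q ∣ f := by
  obtain ⟨g, hg⟩ := h
  obtain ⟨f', rfl⟩ : p ∣ f := hpq f ⟨q * g - f, by linear_combination hg⟩
  have hf' : (p + q) * f' = q * g := hp (by linear_combination hg)
  obtain ⟨f'', rfl⟩ : q ∣ f' := hqp f' ⟨g - f', by linear_combination hf'⟩
  exact ⟨f'', by ring⟩

theorem Ideal.Quotient.mk_add_mem_nonZeroDivisors {p q : R} (hp : IsLeftRegular p)
    (hpq : ∀ f, p ∣ q * f → p ∣ f) (hqp : ∀ f, q ∣ p * f → q ∣ f) :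
    Ideal.Quotient.mk (Ideal.span {p * q}) (p + q) ∈ nonZeroDivisors (R ⧸ Ideal.span {p * q}) := by
  rw [mem_nonZeroDivisors_iff_right]
  intro z hz
  obtain ⟨f, rfl⟩ := Ideal.Quotient.mk_surjective z
  rw [← map_mul, Ideal.Quotient.eq_zero_iff_mem, Ideal.mem_span_singleton, mul_comm f] at hz
  rw [Ideal.Quotient.eq_zero_iff_mem, Ideal.mem_span_singleton]
  exact mul_dvd_of_mul_dvd_add_mul hp hpq hqp hz

theorem Ideal.isCompl_span_singleton_of_mul_eq_zero {a b : R} (hab : a * b = 0)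
    (hu : IsUnit (a + b)) : IsCompl (Ideal.span {a}) (Ideal.span {b}) := by
  constructor
  · rw [disjoint_iff, eq_bot_iff]
    rintro z ⟨hza, hzb⟩
    obtain ⟨c, rfl⟩ := Ideal.mem_span_singleton'.mp hza
    obtain ⟨d, hd⟩ := Ideal.mem_span_singleton'.mp hzb
    have : c * a * (a + b) = 0 := by linear_combination (c + d) * hab - a * hd
    exact hu.mul_left_eq_zero.mp this
  · rw [codisjoint_iff]
    exact Ideal.eq_top_of_isUnit_mem _
      (Submodule.add_mem_sup (Ideal.mem_span_singleton_self a) (Ideal.mem_span_singleton_self b)) hu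

end

variable {F}

open MvPowerSeries in
theorem xS_sq_add_yS_mem_nonZeroDivisors : xS F ^ 2 + yS F ∈ nonZeroDivisors (Dinf F) := by
  have hx (f : MvPowerSeries (Fin 2) F) (h : X 0 ^ 2 ∣ X 1 * f) : X 0 ^ 2 ∣ f := by
    rw [← pow_one (X 1 : MvPowerSeries (Fin 2) F)] at h
    exact X_pow_dvd_of_dvd_X_pow_mul (by decide) h
  have hy (f : MvPowerSeries (Fin 2) F) (h : X 1 ∣ X 0 ^ 2 * f) : X 1 ∣ f := by
    rw [← pow_one (X 1 : MvPowerSeries (Fin 2) F)] at h ⊢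
    exact X_pow_dvd_of_dvd_X_pow_mul (by decide) h
  exact Ideal.Quotient.mk_add_mem_nonZeroDivisors (IsRegular.of_ne_zero' (X_pow_ne_zero 0 2)).left
    hx hy

theorem xS_sq_mul_yS : xS F ^ 2 * yS F = 0 :=
  Ideal.Quotient.eq_zero_iff_mem.mpr (Ideal.subset_span rfl)

variable (F)

theorem stmt10 :
    (Ideal.span {toQ F (xS F ^ 2)} : Ideal (QS F)) ⊓ Ideal.span {toQ F (yS F)} = ⊥ ∧
    (Ideal.span {toQ F (xS F ^ 2)} : Ideal (QS F)) ⊔ Ideal.span {toQ F (yS F)} = ⊤ := by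
  have hcompl : IsCompl (Ideal.span {toQ F (xS F ^ 2)}) (Ideal.span {toQ F (yS F)}) := by
    refine Ideal.isCompl_span_singleton_of_mul_eq_zero (R := QS F) ?_ ?_
    · rw [← map_mul, xS_sq_mul_yS, map_zero]
    · rw [← map_add]
      exact IsLocalization.map_units (QS F) ⟨_, xS_sq_add_yS_mem_nonZeroDivisors⟩
  exact ⟨hcompl.inf_eq_bot, hcompl.sup_eq_top⟩
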